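/- For every non-negative integer t and any power of a formal variable, the coefficient of z^{2t} in the formal power series S(z)^{ν-1}, viewed as a function of the integer parameter ν, is given by a polynomial in ν of degree t. That is, there exists a polynomial P_t ∈ ℚ[x] with deg P_t = t such that [z^{2t}] S(z)^{ν-1} = P_t(ν) for all positive integers ν. -/

import Mathlib

/-!
Write `S = 1 + z² U` with `U(0) = 1/24 ≠ 0`. By the binomial theorem,
`[z^{2t}] S^n = ∑_{k ≤ t} [z^{2t}] (z² U)^k · C(n, k)`: the terms with `k > t` vanish because
`(z² U)^k` starts in degree `2k`, and the term `k = t` has coefficient `U(0)^t ≠ 0`.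
Since `C(n, k)` is a polynomial of degree `k` in `n`, this is a polynomial of degree exactly `t`
in `n`; substituting `n = ν - 1` is a shift, which preserves the degree.
-/

open Nat

/-- The formal power series `S(z) = 2 sinh(z/2)/z = ∑_{m≥0} z^{2m}/(2^{2m}(2m+1)!)
  = 1 + z²/24 + z⁴/1920 + ⋯`. -/
noncomputable def Spow : PowerSeries ℚ :=
  PowerSeries.mk fun n => if Even n then (1 : ℚ) / (2 ^ n * (n + 1)!) else 0

open Finset PowerSeries

open Polynomial in
theorem Polynomial.exists_degree_eq_eval_eq_sum_mul_choose {K : Type*} [Field K] [CharZero K]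
    (a : ℕ → K) {t : ℕ} (ht : a t ≠ 0) :
    ∃ P : K[X], P.degree = t ∧ ∀ n : ℕ, P.eval (n : K) = ∑ k ∈ range (t + 1), a k * n.choose k := by
  have degree_descPochhammer : ∀ k, (descPochhammer K k).degree = k := fun k => by
    rw [degree_eq_natDegree (monic_descPochhammer K k).ne_zero, descPochhammer_natDegree]
  refine ⟨∑ k ∈ range (t + 1), C (a k / k !) * descPochhammer K k, ?_, fun n => ?_⟩
  · have lower : (∑ k ∈ range t, C (a k / k !) * descPochhammer K k).degree < t := by
      refine (degree_sum_le _ _).trans_lt <|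
        (Finset.sup_lt_iff (WithBot.bot_lt_coe t)).2 fun k hk => ?_
      rw [← smul_eq_C_mul]
      exact (degree_smul_le _ _).trans_lt <| (degree_descPochhammer k).trans_lt <|
        WithBot.coe_lt_coe.2 (mem_range.1 hk)
    have top : (C (a t / t !) * descPochhammer K t).degree = t := by
      rw [degree_C_mul (div_ne_zero ht (Nat.cast_ne_zero.2 t.factorial_ne_zero)),
        degree_descPochhammer]
    rw [sum_range_succ, degree_add_eq_right_of_degree_lt (top ▸ lower), top]
  · simp only [eval_finsetSum, eval_mul, eval_C, Nat.cast_choose_eq_descPochhammer_div,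
      mul_div_assoc']
    exact sum_congr rfl fun k _ => div_mul_eq_mul_div _ _ _

namespace PowerSeries

section CommSemiring

variable {R : Type*} [CommSemiring R]

theorem coeff_one_add_pow (g : R⟦X⟧) {d t : ℕ} (hg : ∀ k, t < k → coeff d (g ^ k) = 0) (n : ℕ) :
    coeff d ((1 + g) ^ n) = ∑ k ∈ range (t + 1), coeff d (g ^ k) * n.choose k := by
  have binomial :
      coeff d ((1 + g) ^ n) = ∑ k ∈ range (n + 1), coeff d (g ^ k) * n.choose k := by
    simp only [add_comm (1 : R⟦X⟧), add_pow, one_pow, mul_one, map_sum,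
      ← map_natCast (C (R := R)), coeff_mul_C]
  rw [binomial, ← eventually_constant_sum (N := n + 1) _ (by omega : n + 1 ≤ t + n + 1),
    ← eventually_constant_sum (N := t + 1) _ (by omega : t + 1 ≤ t + n + 1)]
  · intro k hk
    rw [hg k hk, zero_mul]
  · intro k hk
    rw [Nat.choose_eq_zero_of_lt hk, Nat.cast_zero, mul_zero]

theorem coeff_mul_X_pow_mul_pow_of_lt (U : R⟦X⟧) {m t k : ℕ} (hm : 0 < m) (hk : t < k) :
    coeff (m * t) ((X ^ m * U) ^ k) = 0 := by
  rw [mul_pow, ← pow_mul, coeff_X_pow_mul', if_neg]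
  exact fun hle => (Nat.le_of_mul_le_mul_left hle hm).not_gt hk

theorem coeff_mul_X_pow_mul_pow_self (U : R⟦X⟧) (m t : ℕ) :
    coeff (m * t) ((X ^ m * U) ^ t) = constantCoeff U ^ t := by
  rw [mul_pow, ← pow_mul, coeff_X_pow_mul', if_pos le_rfl, Nat.sub_self,
    coeff_zero_eq_constantCoeff, map_pow]

end CommSemiring

theorem exists_degree_eq_coeff_pow_one_add_X_pow_mul {K : Type*} [Field K] [CharZero K]
    (U : K⟦X⟧) (hU : constantCoeff U ≠ 0) {m : ℕ} (hm : 0 < m) (t : ℕ) :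
    ∃ P : Polynomial K, P.degree = t ∧
      ∀ n : ℕ, coeff (m * t) ((1 + X ^ m * U) ^ n) = P.eval (n : K) := by
  obtain ⟨P, hdeg, heval⟩ := Polynomial.exists_degree_eq_eval_eq_sum_mul_choose
    (fun k => coeff (m * t) ((X ^ m * U) ^ k)) (t := t)
    (by rw [coeff_mul_X_pow_mul_pow_self]; exact pow_ne_zero t hU)
  refine ⟨P, hdeg, fun n => ?_⟩
  rw [heval, coeff_one_add_pow _ (fun k => coeff_mul_X_pow_mul_pow_of_lt U hm) n]

end PowerSeries

theorem Spow_eq_one_add_X_sq_mul : ∃ U : ℚ⟦X⟧, Spow = 1 + X ^ 2 * U ∧ constantCoeff U ≠ 0 := by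
  refine ⟨mk fun n => if Even n then (1 : ℚ) / (2 ^ (n + 2) * (n + 3)!) else 0, ?_, ?_⟩
  · ext n
    rw [map_add, coeff_X_pow_mul']
    match n with
    | 0 => simp [Spow]
    | 1 => simp [Spow]
    | d + 2 => simp [Spow, coeff_one, Nat.even_add]
  · simp [← coeff_zero_eq_constantCoeff_apply, factorial_ne_zero]

/-- For every `t ≥ 0` there is a polynomial `P_t ∈ ℚ[x]` of degree `t` such that
`[z^{2t}] S(z)^{ν-1} = P_t(ν)` for all positive integers `ν`. -/
theorem coeff_S_pow_polynomial (t : ℕ) :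
    ∃ P : Polynomial ℚ, P.degree = t ∧
      ∀ ν : ℕ, 0 < ν →
        PowerSeries.coeff (2 * t) (Spow ^ (ν - 1)) = P.eval (ν : ℚ) := by
  obtain ⟨U, hS, hU⟩ := Spow_eq_one_add_X_sq_mul
  obtain ⟨Q, hdeg, hcoeff⟩ := exists_degree_eq_coeff_pow_one_add_X_pow_mul U hU two_pos t
  refine ⟨Q.taylor (-1), by rw [Polynomial.degree_taylor, hdeg], fun ν hν => ?_⟩
  rw [hS, hcoeff, Polynomial.taylor_eval, Nat.cast_pred hν, sub_eq_add_neg]
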